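/- Let f : ℝ^d → ℝ and μ : ℝ^d → ℝ be twice continuously differentiable at x with f(x) > 0. Define, for r > 0, m(r) = [∫_{S^{d−1}} μ(x + rξ) f(x + rξ) ν(dξ)] / [∫_{S^{d−1}} f(x + rξ) ν(dξ)], the sphere-averaged regression value at radius r. Then as r → 0, m(r) = μ(x) + [f(x)·tr(μ''(x)) + 2·∇μ(x)ᵀ∇f(x)] / (2·d·f(x)) · r² + o(r²). -/

import Mathlib

/-!
Write `ν` for the Hausdorff measure `μH[d-1]` on the unit sphere and `ω` for its total mass.
For `g` of class `C²` at `x`, a Taylor expansion of order two that is uniform in the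
direction gives
  `∫ g (x + r • ξ) dν = ω g(x) + ω / (2d) · Δg(x) · r² + o(r²)`,
because `ν` is invariant under the linear isometries `ξ ↦ -ξ`, coordinate reflections and
coordinate swaps, whence `∫ ξ dν = 0` and `∫ ξᵢ ξⱼ dν = δᵢⱼ ω / d`. Apply this to `μ f` and to `f`
and expand the quotient: `Δ(μ f) = μ Δf + f Δμ + 2 ∇μ · ∇f`, and the term `μ Δf` cancels against
the expansion of the denominator.

That `0 < ω < ∞` is seen from Lipschitz maps: the radial projections of the `2d` faces of the cube
`[-1, 1]ᵈ` cover the sphere, and the projection forgetting one coordinate maps the sphere onto the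
unit ball of `ℝᵈ⁻¹`.
-/

open MeasureTheory Filter Asymptotics

open Metric Set Topology InnerProductSpace Laplacian

theorem Asymptotics.IsLittleO.div_expansion {α : Type*} {l : Filter α} {N F g : α → ℝ}
    {a b c e : ℝ} (hc : c ≠ 0) (hg : Tendsto g l (𝓝 0))
    (hN : (fun t => N t - a - b * g t) =o[l] g) (hF : (fun t => F t - c - e * g t) =o[l] g) :
    (fun t => N t / F t - a / c - (b * c - a * e) / c ^ 2 * g t) =o[l] g := by
  have hFc : Tendsto F l (𝓝 c) := by
    simpa using (hF.isBigO.trans_tendsto hg).add ((hg.const_mul e).const_add c)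
  have hFc0 : Tendsto (fun t => F t - c) l (𝓝 0) := by
    simpa using hFc.sub_const c
  set k := (b * c - a * e) / c ^ 2 with hk
  have hnum : (fun t => N t - a / c * F t - k * g t * F t) =o[l] g := by
    have hrem : (fun t => k * g t * (F t - c)) =o[l] g := by
      simpa [mul_comm] using
        ((isBigO_refl g l).const_mul_left k).mul_isLittleO ((isLittleO_one_iff ℝ).2 hFc0)
    -- the coefficient of `g t` vanishes because `k * c = b - a / c * e`
    refine ((hN.sub (hF.const_mul_left (a / c))).sub hrem).congr_left fun t => ?_
    rw [hk]
    field_simp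
    ring
  have hinv : (fun t => (F t)⁻¹) =O[l] (fun _ => (1 : ℝ)) := (hFc.inv₀ hc).isBigO_one ℝ
  refine (hnum.mul_isBigO hinv).congr' ?_ (by simp)
  filter_upwards [hFc.eventually_ne hc] with t ht
  field_simp

theorem ContDiffAt.isLittleO_taylor_two {V : Type*} [NormedAddCommGroup V] [NormedSpace ℝ V]
    {g : V → ℝ} {x : V} (hg : ContDiffAt ℝ 2 g x) :
    (fun v => g (x + v) - g x - fderiv ℝ g x v - 1 / 2 * fderiv ℝ (fderiv ℝ g) x v v)
      =o[𝓝 0] fun v => ‖v‖ ^ 2 := by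
  set A := fderiv ℝ (fderiv ℝ g) x
  have hA : HasFDerivAt (fderiv ℝ g) A x :=
    ((hg.fderiv_right (m := 1) le_rfl).differentiableAt one_ne_zero).hasFDerivAt
  have hsymm : ∀ v w, A v w = A w v := hg.isSymmSndFDerivAt (by simp)
  obtain ⟨δ, hδ, hdiff⟩ : ∃ δ > 0, ∀ v ∈ ball (0 : V) δ, DifferentiableAt ℝ g (x + v) := by
    have h := (hg.eventually (by simp)).mono fun y hy => hy.differentiableAt two_ne_zero
    have h' := (continuous_const_add x).tendsto' 0 x (add_zero x) |>.eventually h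
    exact Metric.eventually_nhds_iff_ball.1 h'
  have hderiv : ∀ v ∈ ball (0 : V) δ, HasFDerivWithinAt
      (fun v => g (x + v) - g x - fderiv ℝ g x v - 1 / 2 * A v v)
      (fderiv ℝ g (x + v) - fderiv ℝ g x - A v) (ball 0 δ) v := by
    intro v hv
    have hq : HasFDerivAt (fun v => A v v) (A v + A.flip v) v := by
      simpa using (A.hasFDerivAt (x := v)).clm_apply (hasFDerivAt_id v)
    have h : HasFDerivAt (fun v => g (x + v) - g x - fderiv ℝ g x v - 1 / 2 * A v v) _ v :=
      ((((hdiff v hv).hasFDerivAt.comp v ((hasFDerivAt_id v).const_add x)).sub_const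
        (g x)).sub (fderiv ℝ g x).hasFDerivAt).sub (hq.const_mul (1 / 2))
    refine (h.congr_fderiv ?_).hasFDerivWithinAt
    ext w
    simp only [ContinuousLinearMap.comp_id, smul_add, sub_apply, add_apply, smul_apply,
      smul_eq_mul, ContinuousLinearMap.flip_apply, hsymm w v]
    ring
  have hsmall : (fun v => fderiv ℝ g (x + v) - fderiv ℝ g x - A v)
      =o[𝓝[ball 0 δ] 0] fun v => ‖v - 0‖ ^ 1 := by
    simpa using (hasFDerivAt_iff_isLittleO_nhds_zero.1 hA).norm_right.mono nhdsWithin_le_nhds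
  have h := (convex_ball (0 : V) δ).isLittleO_pow_succ (mem_ball_self hδ) hderiv hsmall
  rw [nhdsWithin_eq_nhds.2 (ball_mem_nhds 0 hδ)] at h
  simpa using h

theorem fderiv_fderiv_mul_apply {V : Type*} [NormedAddCommGroup V] [NormedSpace ℝ V]
    {g h : V → ℝ} {x : V} (hg : ContDiffAt ℝ 2 g x) (hh : ContDiffAt ℝ 2 h x) (v w : V) :
    fderiv ℝ (fderiv ℝ fun y => g y * h y) x v w
      = g x * fderiv ℝ (fderiv ℝ h) x v w + h x * fderiv ℝ (fderiv ℝ g) x v w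
        + fderiv ℝ g x v * fderiv ℝ h x w + fderiv ℝ h x v * fderiv ℝ g x w := by
  have hD : fderiv ℝ (fun y => g y * h y)
      =ᶠ[𝓝 x] fun y => g y • fderiv ℝ h y + h y • fderiv ℝ g y := by
    filter_upwards [hg.eventually (by simp), hh.eventually (by simp)] with y hgy hhy
    exact fderiv_fun_mul (hgy.differentiableAt two_ne_zero) (hhy.differentiableAt two_ne_zero)
  have hD2 : ∀ {k : V → ℝ}, ContDiffAt ℝ 2 k x →
      HasFDerivAt (fderiv ℝ k) (fderiv ℝ (fderiv ℝ k) x) x := fun hk =>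
    ((hk.fderiv_right (m := 1) le_rfl).differentiableAt one_ne_zero).hasFDerivAt
  have hD1 : ∀ {k : V → ℝ}, ContDiffAt ℝ 2 k x → HasFDerivAt k (fderiv ℝ k x) x := fun hk =>
    (hk.differentiableAt two_ne_zero).hasFDerivAt
  have hsum : HasFDerivAt (fun y => g y • fderiv ℝ h y + h y • fderiv ℝ g y) _ x :=
    ((hD1 hg).smul (hD2 hh)).add ((hD1 hh).smul (hD2 hg))
  rw [hD.fderiv_eq, hsum.fderiv]
  simp only [add_apply, smul_apply, ContinuousLinearMap.smulRight_apply, smul_eq_mul]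
  ring

theorem laplacian_eq_sum_fderiv_fderiv {V : Type*} [NormedAddCommGroup V]
    [InnerProductSpace ℝ V] [FiniteDimensional ℝ V] {ι : Type*} [Fintype ι]
    (b : OrthonormalBasis ι ℝ V) (g : V → ℝ) (x : V) : Δ g x = ∑ i, fderiv ℝ (fderiv ℝ g) x (b i) (b i) := by
  simp [laplacian_eq_iteratedFDeriv_orthonormalBasis g b, iteratedFDeriv_two_apply]

theorem ContDiffAt.laplacian_mul {V : Type*} [NormedAddCommGroup V] [InnerProductSpace ℝ V]
    [FiniteDimensional ℝ V] {ι : Type*} [Fintype ι] (b : OrthonormalBasis ι ℝ V) {g h : V → ℝ}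
    {x : V} (hg : ContDiffAt ℝ 2 g x) (hh : ContDiffAt ℝ 2 h x) :
    Δ (fun y => g y * h y) x
      = g x * Δ h x + h x * Δ g x + 2 * ∑ i, fderiv ℝ g x (b i) * fderiv ℝ h x (b i) := by
  simp only [laplacian_eq_sum_fderiv_fderiv b, fderiv_fderiv_mul_apply hg hh,
    Finset.sum_add_distrib, Finset.mul_sum, two_mul, mul_comm (fderiv ℝ h x _)]
  ring

theorem Asymptotics.IsLittleO.integral_comp_smul {V : Type*} [NormedAddCommGroup V]
    [NormedSpace ℝ V] [MeasurableSpace V] {ρ : Measure V} [IsFiniteMeasure ρ]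
    (hρ : ∀ᵐ ξ ∂ρ, ‖ξ‖ = 1) {h : V → ℝ} (hh : h =o[𝓝 0] fun v => ‖v‖ ^ 2) :
    (fun r : ℝ => ∫ ξ, h (r • ξ) ∂ρ) =o[𝓝 0] fun r => r ^ 2 := by
  suffices (fun r : ℝ => ∫ ξ, h (r • ξ) ∂ρ) =o[𝓝 0] fun r => ρ.real univ * r ^ 2 from
    this.trans_isBigO ((isBigO_refl _ _).const_mul_left _)
  refine isLittleO_iff.2 fun c hc => ?_
  obtain ⟨δ, hδ, hbound⟩ := Metric.eventually_nhds_iff.1 (isLittleO_iff.1 hh hc)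
  filter_upwards [Metric.ball_mem_nhds (0 : ℝ) hδ] with r hr
  have hpt : ∀ᵐ ξ ∂ρ, ‖h (r • ξ)‖ ≤ c * r ^ 2 := by
    filter_upwards [hρ] with ξ hξ
    have hnorm : ‖r • ξ‖ = |r| := by rw [norm_smul, hξ, mul_one, Real.norm_eq_abs]
    have := hbound (y := r • ξ) (by rw [dist_zero_right, hnorm]; simpa using hr)
    simpa [hnorm] using this
  calc ‖∫ ξ, h (r • ξ) ∂ρ‖ ≤ c * r ^ 2 * ρ.real univ := norm_integral_le_of_norm_le_const hpt
    _ = c * ‖ρ.real univ * r ^ 2‖ := by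
      rw [Real.norm_of_nonneg (by positivity)]; ring

theorem eventually_continuousOn_sphere_comp_add_smul {V : Type*} [NormedAddCommGroup V]
    [NormedSpace ℝ V] {g : V → ℝ} {x : V} (hg : ∀ᶠ y in 𝓝 x, ContinuousAt g y) :
    ∀ᶠ r in 𝓝 (0 : ℝ), ContinuousOn (fun ξ => g (x + r • ξ)) (sphere 0 1) := by
  obtain ⟨δ, hδ, hcont⟩ := Metric.eventually_nhds_iff_ball.1 hg
  filter_upwards [ball_mem_nhds (0 : ℝ) hδ] with r hr ξ hξ
  have hmem : x + r • ξ ∈ ball x δ := by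
    rw [mem_sphere_zero_iff_norm] at hξ
    simpa [norm_smul, hξ] using hr
  exact (hcont _ hmem).comp_continuousWithinAt (f := fun ξ => x + r • ξ)
    (continuous_const.add (continuous_const_smul r)).continuousWithinAt

theorem integral_sphere_comp_linearIsometryEquiv {V F : Type*} [NormedAddCommGroup V]
    [NormedSpace ℝ V] [MeasurableSpace V] [BorelSpace V] [NormedAddCommGroup F]
    [NormedSpace ℝ F] (L : V ≃ₗᵢ[ℝ] V) (d : ℝ) (g : V → F) :
    ∫ ξ in sphere (0 : V) 1, g (L ξ) ∂μH[d] = ∫ ξ in sphere (0 : V) 1, g ξ ∂μH[d] := by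
  have hL := (L.toIsometryEquiv.measurePreserving_hausdorffMeasure d).restrict_preimage
    (isClosed_sphere (x := (0 : V)) (ε := 1)).measurableSet
  have hpre : L.toIsometryEquiv ⁻¹' sphere (0 : V) 1 = sphere 0 1 := by ext; simp
  rw [hpre] at hL
  exact hL.integral_comp L.toHomeomorph.measurableEmbedding g

theorem integral_sphere_clm_eq_zero {V : Type*} [NormedAddCommGroup V] [NormedSpace ℝ V]
    [MeasurableSpace V] [BorelSpace V] (d : ℝ) (ℓ : V →L[ℝ] ℝ) :
    ∫ ξ in sphere (0 : V) 1, ℓ ξ ∂μH[d] = 0 := by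
  have h := integral_sphere_comp_linearIsometryEquiv (LinearIsometryEquiv.neg ℝ) d ℓ
  simp only [LinearIsometryEquiv.coe_neg, map_neg, integral_neg] at h
  linarith

theorem NormedSpace.lipschitzOnWith_normalize {V : Type*} [NormedAddCommGroup V]
    [NormedSpace ℝ V] : LipschitzOnWith 2 (normalize : V → V) {y | 1 ≤ ‖y‖} := by
  refine LipschitzOnWith.of_dist_le_mul fun a (ha : 1 ≤ ‖a‖) b (hb : 1 ≤ ‖b‖) => ?_
  have ha0 : 0 < ‖a‖ := one_pos.trans_le ha
  have hb0 : 0 < ‖b‖ := one_pos.trans_le hb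
  have hsplit : normalize a - normalize b = ‖a‖⁻¹ • (a - b) + (‖a‖⁻¹ - ‖b‖⁻¹) • b := by
    simp only [normalize, smul_sub, sub_smul]; abel
  have hcoef : |‖a‖⁻¹ - ‖b‖⁻¹| * ‖b‖ = |‖b‖ - ‖a‖| / ‖a‖ := by
    rw [inv_sub_inv ha0.ne' hb0.ne', abs_div, abs_mul, abs_of_pos ha0, abs_of_pos hb0]
    field_simp
  rw [dist_eq_norm, dist_eq_norm, hsplit, NNReal.coe_ofNat]
  calc ‖‖a‖⁻¹ • (a - b) + (‖a‖⁻¹ - ‖b‖⁻¹) • b‖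
      ≤ ‖a‖⁻¹ * ‖a - b‖ + |‖a‖⁻¹ - ‖b‖⁻¹| * ‖b‖ := by
        refine (norm_add_le _ _).trans_eq ?_
        rw [norm_smul, norm_smul, norm_inv, norm_norm, Real.norm_eq_abs]
    _ = (‖a - b‖ + |‖b‖ - ‖a‖|) / ‖a‖ := by rw [hcoef]; field_simp
    _ ≤ ‖a - b‖ + ‖a - b‖ := by
        rw [div_le_iff₀ ha0]
        have := abs_norm_sub_norm_le b a
        rw [norm_sub_rev] at this
        nlinarith [norm_nonneg (a - b)]
    _ = 2 * ‖a - b‖ := by ring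

section EuclideanSphere

variable {n : ℕ}

local notation "E" => EuclideanSpace ℝ (Fin (n + 1))

local notation "ν" => Measure.restrict (μH[(n : ℝ)] : Measure E) (sphere (0 : E) 1)

local notation "ω" => Measure.real (μH[(n : ℝ)] : Measure E) (sphere (0 : E) 1)

noncomputable def cubeFace (i : Fin (n + 1)) (ε : ℝ) (u : Fin n → ℝ) : E :=
  WithLp.toLp 2 (i.insertNth ε u)

theorem lipschitzWith_cubeFace (i : Fin (n + 1)) (ε : ℝ) :
    LipschitzWith ((n + 1 : ℕ) ^ (1 / 2 : ℝ) : NNReal) (cubeFace i ε) := by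
  have hins : Isometry (Fin.insertNth (α := fun _ => ℝ) i ε) :=
    Isometry.of_dist_eq fun u v => by
      rw [Fin.dist_insertNth_insertNth, dist_self, max_eq_right dist_nonneg]
  have h := (PiLp.lipschitzWith_toLp 2 fun _ : Fin (n + 1) => ℝ).comp hins.lipschitz
  rw [mul_one] at h
  convert h using 2 <;> first | rfl | simp

theorem one_le_norm_cubeFace (i : Fin (n + 1)) {ε : ℝ} (hε : |ε| = 1) (u : Fin n → ℝ) :
    1 ≤ ‖cubeFace i ε u‖ := by
  simpa [cubeFace, hε] using PiLp.norm_apply_le (cubeFace i ε u) i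

theorem sphere_subset_iUnion_normalize_cubeFace :
    sphere (0 : E) 1 ⊆ ⋃ p ∈ (univ ×ˢ {-1, 1} : Set (Fin (n + 1) × ℝ)),
      NormedSpace.normalize '' (cubeFace p.1 p.2 '' closedBall 0 1) := by
  intro ξ hξ
  rw [mem_sphere_zero_iff_norm] at hξ
  obtain ⟨i, -, hmax⟩ :=
    Finset.exists_max_image Finset.univ (fun k => |ξ k|) Finset.univ_nonempty
  have hi : ξ i ≠ 0 := by
    intro h0
    have : ξ = 0 := by
      ext k; simpa [h0] using hmax k (Finset.mem_univ k)
    simp [this] at hξ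
  have ht : 0 < |ξ i| := abs_pos.2 hi
  set u : Fin n → ℝ := fun j => ξ (i.succAbove j) / |ξ i|
  have hu : u ∈ closedBall 0 1 := by
    refine (dist_pi_le_iff zero_le_one).2 fun j => ?_
    rw [Pi.zero_apply, dist_zero_right, Real.norm_eq_abs, abs_div, abs_abs, div_le_one ht]
    exact hmax _ (Finset.mem_univ _)
  have hface : cubeFace i (ξ i / |ξ i|) u = |ξ i|⁻¹ • ξ := by
    refine congrArg (WithLp.toLp 2) (Fin.insertNth_eq_iff.2 ⟨?_, ?_⟩)
    · simp [div_eq_inv_mul]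
    · ext j; simp [u, Fin.removeNth, div_eq_inv_mul]
  have hε : ξ i / |ξ i| ∈ ({-1, 1} : Set ℝ) := by
    rcases hi.lt_or_gt with h | h
    · simp [abs_of_neg h, hi]
    · simp [abs_of_pos h, hi]
  refine mem_biUnion (x := (i, ξ i / |ξ i|)) ⟨mem_univ _, hε⟩ ⟨_, ⟨u, hu, hface⟩, ?_⟩
  rw [NormedSpace.normalize_smul_of_pos (inv_pos.2 ht),
    NormedSpace.normalize_eq_self_of_norm_eq_one hξ]

theorem hausdorffMeasure_pi_fin : (μH[(n : ℝ)] : Measure (Fin n → ℝ)) = volume := by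
  simpa using hausdorffMeasure_pi_real (ι := Fin n)

theorem hausdorffMeasure_sphere_lt_top : (μH[(n : ℝ)] : Measure E) (sphere 0 1) < ⊤ := by
  refine (measure_mono sphere_subset_iUnion_normalize_cubeFace).trans_lt <|
    measure_biUnion_lt_top (finite_univ.prod (toFinite _)) fun p hp => ?_
  have hε : |p.2| = 1 := by
    rcases hp.2 with h | h <;> simp_all
  have hlip := NormedSpace.lipschitzOnWith_normalize.comp
    ((lipschitzWith_cubeFace p.1 p.2).lipschitzOnWith (s := closedBall 0 1))
    (fun u _ => one_le_norm_cubeFace p.1 hε u)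
  rw [← image_comp]
  refine (hlip.hausdorffMeasure_image_le (Nat.cast_nonneg n)).trans_lt
    (ENNReal.mul_lt_top
      (ENNReal.rpow_lt_top_of_nonneg (Nat.cast_nonneg n) ENNReal.coe_ne_top) ?_)
  rw [hausdorffMeasure_pi_fin]
  exact measure_closedBall_lt_top

theorem closedBall_subset_image_tail_sphere :
    closedBall (0 : Fin n → ℝ) (1 / (n + 1)) ⊆
      (fun ξ : E => Fin.tail (WithLp.ofLp ξ)) '' sphere 0 1 := by
  intro u hu
  have hcoord : ∀ j, u j ^ 2 ≤ (1 / (n + 1)) ^ 2 := fun j => by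
    have := (dist_pi_le_iff (by positivity)).1 (mem_closedBall.1 hu) j
    rw [Pi.zero_apply, dist_zero_right, Real.norm_eq_abs] at this
    exact sq_le_sq' (neg_le_of_abs_le this) (le_of_abs_le this)
  have hsum : ∑ j, u j ^ 2 ≤ 1 := by
    calc ∑ j, u j ^ 2 ≤ n * (1 / (n + 1)) ^ 2 := by
          simpa using Finset.sum_le_sum fun j (_ : j ∈ Finset.univ) => hcoord j
      _ ≤ 1 := by
          rw [div_pow, one_pow, mul_one_div, div_le_one (by positivity)]
          nlinarith
  refine ⟨WithLp.toLp 2 (Fin.cons (Real.sqrt (1 - ∑ j, u j ^ 2)) u), ?_, Fin.tail_cons _ _⟩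
  rw [EuclideanSpace.sphere_zero_eq 1 zero_le_one, mem_ofPred_eq, Fin.sum_univ_succ]
  simp [Real.sq_sqrt (sub_nonneg.2 hsum)]

theorem hausdorffMeasure_sphere_pos : 0 < (μH[(n : ℝ)] : Measure E) (sphere 0 1) := by
  have hlip : LipschitzWith 1 fun ξ : E => Fin.tail (WithLp.ofLp ξ) := by
    have htail : LipschitzWith 1 (Fin.tail : (Fin (n + 1) → ℝ) → Fin n → ℝ) :=
      LipschitzWith.of_dist_le_mul fun f g => by
        rw [NNReal.coe_one, one_mul]
        exact (dist_pi_le_iff dist_nonneg).2 fun j => dist_le_pi_dist f g j.succ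
    have h := htail.comp (PiLp.lipschitzWith_ofLp 2 fun _ : Fin (n + 1) => ℝ)
    rwa [mul_one] at h
  calc (0 : ENNReal) < volume (closedBall (0 : Fin n → ℝ) (1 / (n + 1))) :=
        measure_closedBall_pos _ _ (by positivity)
    _ ≤ μH[(n : ℝ)] ((fun ξ : E => Fin.tail (WithLp.ofLp ξ)) '' sphere 0 1) := by
        rw [← hausdorffMeasure_pi_fin]; exact measure_mono closedBall_subset_image_tail_sphere
    _ ≤ μH[(n : ℝ)] (sphere (0 : E) 1) := by
        simpa using hlip.hausdorffMeasure_image_le (Nat.cast_nonneg n) (sphere (0 : E) 1)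

instance isFiniteMeasure_sphere : IsFiniteMeasure ν :=
  isFiniteMeasure_restrict.2 hausdorffMeasure_sphere_lt_top.ne

theorem integrable_sphere_of_continuousOn {h : E → ℝ} (hh : ContinuousOn h (sphere 0 1)) :
    Integrable h ν := by
  obtain ⟨C, hC⟩ := (isCompact_sphere (0 : E) 1).exists_bound_of_continuousOn hh
  exact .of_bound (hh.aestronglyMeasurable isClosed_sphere.measurableSet) C
    ((ae_restrict_iff' isClosed_sphere.measurableSet).2 (.of_forall hC))

theorem integral_sphere_coord_mul_coord_of_ne {i j : Fin (n + 1)} (hij : i ≠ j) :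
    ∫ ξ, ξ i * ξ j ∂ν = 0 := by
  let L : E ≃ₗᵢ[ℝ] E := LinearIsometryEquiv.piLpCongrRight 2 fun k =>
    if k = i then LinearIsometryEquiv.neg ℝ else LinearIsometryEquiv.refl ℝ ℝ
  have h : -∫ ξ, ξ i * ξ j ∂ν = ∫ ξ, ξ i * ξ j ∂ν := by
    simpa [L, hij.symm, integral_neg] using
      integral_sphere_comp_linearIsometryEquiv L n fun ξ => ξ i * ξ j
  linarith

theorem integral_sphere_coord_sq (i : Fin (n + 1)) : ∫ ξ, ξ i ^ 2 ∂ν = ω / (n + 1) := by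
  have hswap : ∀ k, ∫ ξ, ξ k ^ 2 ∂ν = ∫ ξ, ξ i ^ 2 ∂ν := fun k => by
    have h := integral_sphere_comp_linearIsometryEquiv
      (LinearIsometryEquiv.piLpCongrLeft 2 ℝ ℝ (Equiv.swap i k)) n fun ξ => ξ i ^ 2
    simpa using h
  have hone : (fun ξ : E => ∑ k, ξ k ^ 2) =ᵐ[ν] fun _ => 1 := by
    filter_upwards [ae_restrict_mem isClosed_sphere.measurableSet] with ξ hξ
    simpa [EuclideanSpace.sphere_zero_eq 1 zero_le_one] using hξ
  have hsum : ∑ k, ∫ ξ, ξ k ^ 2 ∂ν = ω := by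
    rw [← integral_finsetSum _ fun k _ => integrable_sphere_of_continuousOn
      (by fun_prop : Continuous fun ξ : E => ξ k ^ 2).continuousOn, integral_congr_ae hone]
    simp
  simp only [hswap, Finset.sum_const, Finset.card_univ, Fintype.card_fin, nsmul_eq_mul] at hsum
  rw [← hsum]
  push_cast
  field_simp

theorem integral_sphere_coord_mul_coord (i j : Fin (n + 1)) :
    ∫ ξ, ξ i * ξ j ∂ν = if i = j then ω / (n + 1) else 0 := by
  split_ifs with hij
  · subst hij; simpa [sq] using integral_sphere_coord_sq i
  · exact integral_sphere_coord_mul_coord_of_ne hij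

theorem integral_sphere_bilinear (A : E →L[ℝ] E →L[ℝ] ℝ) :
    ∫ ξ, A ξ ξ ∂ν
      = ω / (n + 1) * ∑ k, A (EuclideanSpace.single k 1) (EuclideanSpace.single k 1) := by
  have hexp : ∀ ξ : E, A ξ ξ = ∑ k, ∑ l, ξ k * ξ l
      * A (EuclideanSpace.single k 1) (EuclideanSpace.single l 1) := fun ξ => by
    conv_lhs => rw [← (EuclideanSpace.basisFun (Fin (n + 1)) ℝ).sum_repr ξ]
    simp only [map_sum, map_smul, EuclideanSpace.basisFun_repr, EuclideanSpace.basisFun_apply,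
      sum_apply, smul_apply, smul_eq_mul, Finset.mul_sum]
    rw [Finset.sum_comm]
    simp only [mul_assoc, mul_left_comm]
  have hint : ∀ k l, Integrable (fun ξ : E => ξ k * ξ l
      * A (EuclideanSpace.single k 1) (EuclideanSpace.single l 1)) ν := fun k l =>
    integrable_sphere_of_continuousOn (by fun_prop)
  rw [show (fun ξ : E => A ξ ξ) = _ from funext hexp,
    integral_finsetSum _ fun k _ => integrable_finsetSum _ fun l _ => hint k l]
  simp_rw [integral_finsetSum _ fun l _ => hint _ l, integral_mul_const,
    integral_sphere_coord_mul_coord, ite_mul, zero_mul, Finset.sum_ite_eq, Finset.mem_univ,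
    if_true, Finset.mul_sum]

theorem integral_sphere_quadratic (c : ℝ) (ℓ : E →L[ℝ] ℝ) (A : E →L[ℝ] E →L[ℝ] ℝ) (r : ℝ) :
    ∫ ξ, c + ℓ (r • ξ) + 1 / 2 * A (r • ξ) (r • ξ) ∂ν
      = ω * c + ω / (2 * (n + 1)) * (∑ k, A (EuclideanSpace.single k 1)
          (EuclideanSpace.single k 1)) * r ^ 2 := by
  have hpt : ∀ ξ : E, c + ℓ (r • ξ) + 1 / 2 * A (r • ξ) (r • ξ)
      = c + r * ℓ ξ + r ^ 2 / 2 * A ξ ξ := fun ξ => by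
    simp only [map_smul, smul_apply, smul_eq_mul]; ring
  have hℓ : Integrable (fun ξ : E => r * ℓ ξ) ν := integrable_sphere_of_continuousOn (by fun_prop)
  have hA : Integrable (fun ξ : E => r ^ 2 / 2 * A ξ ξ) ν :=
    integrable_sphere_of_continuousOn (by fun_prop)
  simp_rw [hpt]
  rw [integral_add (f := fun ξ => c + r * ℓ ξ) ((integrable_const c).add hℓ) hA,
    integral_add (integrable_const c) hℓ, integral_const, measureReal_restrict_apply_univ,
    integral_const_mul, integral_const_mul, integral_sphere_clm_eq_zero, integral_sphere_bilinear,
    smul_eq_mul, mul_zero, add_zero]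
  field_simp

theorem ContDiffAt.integral_sphere_expansion {g : E → ℝ} {x : E} (hg : ContDiffAt ℝ 2 g x) :
    (fun r : ℝ => (∫ ξ, g (x + r • ξ) ∂ν) - ω * g x - ω / (2 * (n + 1)) * Δ g x * r ^ 2)
      =o[𝓝 0] fun r => r ^ 2 := by
  have hrem := hg.isLittleO_taylor_two.integral_comp_smul (ρ := ν)
    ((ae_restrict_mem isClosed_sphere.measurableSet).mono fun ξ hξ => by simpa using hξ)
  have hcont := eventually_continuousOn_sphere_comp_add_smul
    ((hg.eventually (by simp)).mono fun y hy => hy.continuousAt)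
  refine hrem.congr' ?_ EventuallyEq.rfl
  filter_upwards [hcont] with r hr
  set D := fderiv ℝ g x
  set A := fderiv ℝ (fderiv ℝ g) x
  calc ∫ ξ, g (x + r • ξ) - g x - D (r • ξ) - 1 / 2 * A (r • ξ) (r • ξ) ∂ν
      = ∫ ξ, g (x + r • ξ) - (g x + D (r • ξ) + 1 / 2 * A (r • ξ) (r • ξ)) ∂ν := by
        congr 1 with ξ; ring
    _ = _ := by
        rw [integral_sub (integrable_sphere_of_continuousOn hr)
          (integrable_sphere_of_continuousOn (by fun_prop)), integral_sphere_quadratic,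
          laplacian_eq_sum_fderiv_fderiv (EuclideanSpace.basisFun _ ℝ)]
        simp only [EuclideanSpace.basisFun_apply, A]
        ring

end EuclideanSphere

theorem sphere_average_regression_expansion (d : ℕ) (hd : 0 < d)
    (f μ : EuclideanSpace ℝ (Fin d) → ℝ) (x : EuclideanSpace ℝ (Fin d))
    (hf : ContDiffAt ℝ 2 f x) (hμ : ContDiffAt ℝ 2 μ x) (hfx : 0 < f x) :
    (fun r : ℝ =>
        (∫ ξ in Metric.sphere (0 : EuclideanSpace ℝ (Fin d)) 1,
            μ (x + r • ξ) * f (x + r • ξ)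
            ∂(μH[(d : ℝ) - 1] : Measure (EuclideanSpace ℝ (Fin d)))) /
          (∫ ξ in Metric.sphere (0 : EuclideanSpace ℝ (Fin d)) 1,
            f (x + r • ξ)
            ∂(μH[(d : ℝ) - 1] : Measure (EuclideanSpace ℝ (Fin d)))) -
          μ x -
          ((f x * (∑ i, iteratedFDeriv ℝ 2 μ x
                ![EuclideanSpace.single i 1, EuclideanSpace.single i 1]) +
              2 * ∑ i, fderiv ℝ μ x (EuclideanSpace.single i 1) *
                fderiv ℝ f x (EuclideanSpace.single i 1)) /
            (2 * d * f x)) * r ^ 2)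
      =o[nhdsWithin 0 (Set.Ioi 0)] fun r : ℝ => r ^ 2 := by
  obtain ⟨n, rfl⟩ : ∃ n, d = n + 1 := ⟨d - 1, by omega⟩
  rw [show ((n + 1 : ℕ) : ℝ) - 1 = n by push_cast; ring]
  have hω : 0 < (μH[(n : ℝ)] : Measure (EuclideanSpace ℝ (Fin (n + 1)))).real (sphere 0 1) :=
    ENNReal.toReal_pos hausdorffMeasure_sphere_pos.ne' hausdorffMeasure_sphere_lt_top.ne
  have hr2 : Tendsto (fun r : ℝ => r ^ 2) (𝓝 0) (𝓝 0) := by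
    simpa using (continuous_pow 2).tendsto (0 : ℝ)
  have h := (hμ.mul hf).integral_sphere_expansion.div_expansion
    (mul_ne_zero hω.ne' hfx.ne') hr2 hf.integral_sphere_expansion
  have hΔ : Δ μ x = ∑ i, iteratedFDeriv ℝ 2 μ x
      ![EuclideanSpace.single i 1, EuclideanSpace.single i 1] := by
    simp [laplacian_eq_iteratedFDeriv_orthonormalBasis μ (EuclideanSpace.basisFun _ ℝ)]
  rw [hμ.laplacian_mul (EuclideanSpace.basisFun _ ℝ) hf] at h
  refine (h.mono nhdsWithin_le_nhds).congr_left fun r => ?_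
  simp only [← hΔ, EuclideanSpace.basisFun_apply]
  push_cast
  field_simp
  ring
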